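/- arXiv:2402.08948 — 7 statements merged into one kernel-verified Lean document; each statement's English description precedes it below -/
import Mathlib

section
/- Let v_1, v_2, …, v_p ∈ ℝ[a] be polynomials in one variable that are linearly independent over ℝ and whose constant terms are all zero. Then the p polynomials u_1, …, u_p ∈ ℝ[a_1, a_2, …, a_p] defined by u_i(a_1,…,a_p) = (1/p)·(v_i(a_1) + v_i(a_2) + ⋯ + v_i(a_p)) are algebraically independent over ℝ. -/
/-!
Jacobian criterion. If `F(u) = 0` is a relation of minimal total degree, the chain rule
gives `(∇F)(u) ⬝ J = 0` for the Jacobian matrix `J` of `u`; when `det J ≠ 0` every `∂ᵢF` is a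
relation of smaller degree, hence zero, so in characteristic zero `F` is a constant, and thus
`F = 0`.

Here `J = p⁻¹ (vᵢ'(aⱼ))ᵢⱼ`. The derivatives `vᵢ'` are linearly independent because the `vᵢ`
have no constant terms, and linearly independent functions admit points `t` with
`det (vᵢ'(tⱼ)) ≠ 0`, so `det J` does not vanish as a polynomial.
-/

open MvPolynomial Matrix

namespace MvPolynomial

variable {R σ τ : Type*}

theorem pderiv_aeval [CommSemiring R] [Fintype σ] (u : σ → MvPolynomial τ R)
    (F : MvPolynomial σ R) (j : τ) :
    pderiv j (aeval u F) = ∑ i, aeval u (pderiv i F) * pderiv j (u i) := by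
  classical
  induction F using MvPolynomial.induction_on with
  | C a => simp
  | add f g hf hg => simp only [map_add, hf, hg, add_mul, Finset.sum_add_distrib]
  | mul_X f k hf =>
    simp only [map_mul, aeval_X, Derivation.leibniz, smul_eq_mul, map_add, hf, pderiv_X,
      add_mul, Finset.sum_add_distrib, Finset.mul_sum, mul_assoc]
    simp [Pi.single_apply]

theorem totalDegree_pderiv_lt [CommSemiring R] {F : MvPolynomial σ R} {i : σ}
    (h : pderiv i F ≠ 0) : (pderiv i F).totalDegree < F.totalDegree := by
  obtain ⟨m, hm, hdeg⟩ := Finset.exists_mem_eq_sup _ (support_nonempty.mpr h)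
    fun m : σ →₀ ℕ => m.sum fun _ e => e
  have hmem : m + Finsupp.single i 1 ∈ F.support := by
    rw [mem_support_iff, coeff_pderiv] at hm
    exact mem_support_iff.mpr (left_ne_zero_of_mul hm)
  have hle := le_totalDegree hmem
  rw [Finsupp.sum_add_index' (fun _ => rfl) (fun _ _ _ => rfl),
    Finsupp.sum_single_index rfl] at hle
  rw [totalDegree, hdeg]
  omega

theorem eq_C_of_pderiv_eq_zero [CommRing R] [IsAddTorsionFree R] {F : MvPolynomial σ R}
    (h : ∀ i, pderiv i F = 0) : F = C (coeff 0 F) := by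
  rw [← coe_inj]
  refine MvPowerSeries.pderiv.ext (fun i => ?_) ?_
  · simp [MvPowerSeries.pderiv_coe, h]
  · simp [← MvPowerSeries.coeff_zero_eq_constantCoeff]

noncomputable def jacobian [CommSemiring R] {ι : Type*} (u : ι → MvPolynomial σ R) :
    Matrix ι σ (MvPolynomial σ R) :=
  of fun i j => pderiv j (u i)

theorem jacobian_smul_sum_aeval_X [CommSemiring R] [Fintype σ] {ι : Type*} (c : R)
    (v : ι → Polynomial R) :
    jacobian (fun i => c • ∑ j, Polynomial.aeval (X j : MvPolynomial σ R) (v i)) =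
      c • of fun i k =>
        Polynomial.aeval (X k : MvPolynomial σ R) (Polynomial.derivative (v i)) := by
  classical
  ext i k : 2
  simp [jacobian, pderiv_X, Pi.single_apply]

section JacobianCriterion

variable [CommRing R] [IsDomain R] [Fintype σ] [DecidableEq σ] {u : σ → MvPolynomial σ R}

theorem aeval_pderiv_eq_zero_of_det_jacobian_ne_zero (hu : (jacobian u).det ≠ 0)
    {F : MvPolynomial σ R} (hF : aeval u F = 0) (i : σ) : aeval u (pderiv i F) = 0 := by
  have hvecMul : (fun i => aeval u (pderiv i F)) ᵥ* jacobian u = 0 := by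
    funext j
    rw [Pi.zero_apply, ← map_zero (pderiv j), ← hF, pderiv_aeval]
    rfl
  by_contra hi
  exact hu (exists_vecMul_eq_zero_iff.mp ⟨_, fun h => hi (congrFun h i), hvecMul⟩)

theorem algebraicIndependent_of_det_jacobian_ne_zero [IsAddTorsionFree R]
    (hu : (jacobian u).det ≠ 0) : AlgebraicIndependent R u := by
  rw [algebraicIndependent_iff]
  intro F hF
  induction hd : F.totalDegree using Nat.strong_induction_on generalizing F with
  | _ d ih =>
  have hpderiv (i : σ) : pderiv i F = 0 := by
    by_contra hi
    exact hi (ih _ (hd ▸ totalDegree_pderiv_lt hi) _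
      (aeval_pderiv_eq_zero_of_det_jacobian_ne_zero hu hF i) rfl)
  rw [eq_C_of_pderiv_eq_zero hpderiv, aeval_C, algebraMap_eq, C_eq_zero] at hF
  rw [eq_C_of_pderiv_eq_zero hpderiv, hF, C_0]

end JacobianCriterion

end MvPolynomial

theorem LinearIndependent.exists_det_apply_ne_zero {K X : Type*} [CommRing K] [Nontrivial K] :
    ∀ {n : ℕ} {f : Fin n → X → K}, LinearIndependent K f →
      ∃ x : Fin n → X, (of fun i j => f i (x j)).det ≠ 0
  | 0, _, _ => ⟨finZeroElim, by simp⟩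
  | n + 1, f, hf => by
    obtain ⟨t, ht⟩ := (hf.comp Fin.succ (Fin.succ_injective n)).exists_det_apply_ne_zero
    -- The cofactors `c i` of a free first point `s` form a nontrivial linear relation unless
    -- some `s` makes the determinant nonzero.
    set c : Fin (n + 1) → K := fun i =>
      (-1) ^ (i : ℕ) * (of fun a b => f (i.succAbove a) (t b)).det
    have hexpand (s : X) :
        (of fun i j => f i ((Fin.cons s t : Fin (n + 1) → X) j)).det = ∑ i, c i * f i s := by
      rw [det_succ_column_zero]
      refine Finset.sum_congr rfl fun i _ => ?_
      simp only [c, submatrix, of_apply, Fin.cons_zero, Fin.cons_succ]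
      ring
    have hc0 : c 0 ≠ 0 := by simpa [c] using ht
    obtain ⟨s, hs⟩ : ∃ s, ∑ i, c i * f i s ≠ 0 := by
      by_contra! h
      exact hc0 (Fintype.linearIndependent_iff.mp hf c (funext fun s => by simpa using h s) 0)
    exact ⟨Fin.cons s t, hexpand s ▸ hs⟩

namespace Polynomial

variable {K : Type*} [CommRing K]

theorem linearIndependent_derivative [IsAddTorsionFree K] {ι : Type*} {v : ι → K[X]}
    (hv : LinearIndependent K v) (hv0 : ∀ i, (v i).coeff 0 = 0) :
    LinearIndependent K fun i => derivative (v i) := by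
  refine hv.map (f := derivative) (Submodule.disjoint_def.mpr fun q hq hdq => ?_)
  have hspan : Submodule.span K (Set.range v) ≤ LinearMap.ker (lcoeff K 0) :=
    Submodule.span_le.mpr (Set.range_subset_iff.mpr hv0)
  have hq0 : q.coeff 0 = 0 := hspan hq
  rw [eq_C_of_derivative_eq_zero hdq, hq0, map_zero]

theorem det_aeval_X_ne_zero [IsDomain K] [Infinite K] {n : ℕ} {f : Fin n → K[X]}
    (hf : LinearIndependent K f) :
    (of fun i j => aeval (MvPolynomial.X j : MvPolynomial (Fin n) K) (f i)).det ≠ 0 := by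
  have hinj : Function.Injective (LinearMap.pi (leval (R := K))) := fun p q h =>
    funext fun x => congrFun h x
  obtain ⟨t, ht⟩ := (hf.map' _ (LinearMap.ker_eq_bot.mpr hinj)).exists_det_apply_ne_zero
  intro h0
  apply ht
  rw [← map_zero (MvPolynomial.eval t), ← h0, RingHom.map_det]
  congr 1
  ext i j
  simpa using aeval_algHom_apply (MvPolynomial.aeval t) (MvPolynomial.X j) (f i)

end Polynomial

theorem stmt_6_general (p : ℕ) (v : Fin p → Polynomial ℝ)
    (hli : LinearIndependent ℝ v) (hconst : ∀ i, (v i).coeff 0 = 0) :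
    AlgebraicIndependent ℝ (fun i : Fin p =>
      (p : ℝ)⁻¹ • ∑ j : Fin p, Polynomial.aeval (X j : MvPolynomial (Fin p) ℝ) (v i)) := by
  apply algebraicIndependent_of_det_jacobian_ne_zero
  rw [jacobian_smul_sum_aeval_X, det_smul_of_tower, Fintype.card_fin]
  refine smul_ne_zero ?_ (Polynomial.det_aeval_X_ne_zero
    (Polynomial.linearIndependent_derivative hli hconst))
  rcases p.eq_zero_or_pos with rfl | hp
  · simp
  · positivity

/-- **Linear independence to algebraic independence.**
Let `v 1, …, v p ∈ ℝ[a]` be `ℝ`-linearly independent univariate polynomials with zero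
constant terms. Then the polynomials
`u i (a₁,…,a_p) = (1/p) (v i (a₁) + ⋯ + v i (a_p)) ∈ ℝ[a₁,…,a_p]`
are algebraically independent over `ℝ`. -/
theorem stmt_6 (p : ℕ) (hp : 0 < p) (v : Fin p → Polynomial ℝ)
    (hli : LinearIndependent ℝ v) (hconst : ∀ i, (v i).coeff 0 = 0) :
    AlgebraicIndependent ℝ (fun i : Fin p =>
      (p : ℝ)⁻¹ • ∑ j : Fin p, Polynomial.aeval (X j : MvPolynomial (Fin p) ℝ) (v i)) :=
  stmt_6_general p v hli hconst
end

section
/- If v_1, v_2, …, v_p ∈ ℝ[a] are univariate real polynomials that are linearly independent over ℝ, then the determinant of the p×p matrix whose (i,j) entry is v_i(a_j) is a nonzero polynomial in ℝ[a_1, a_2, …, a_p]. -/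
/-!
Linear independence of `v₁, …, v_p` as polynomials is linear independence of the functions
`x ↦ vᵢ(x)` (a polynomial over an infinite field is determined by its values). Hence the
vectors `(v₁(x), …, v_p(x))` span `K^p`, and `p` of them, at points `s₁, …, s_p`, form a basis:
`det (vᵢ(sⱼ)) ≠ 0`. This number is the value of the polynomial determinant at `(s₁, …, s_p)`.
-/

open MvPolynomial

open Module Submodule in
theorem exists_linearIndependent_comp_of_span_range_eq_top {K V ι : Type*} [Field K]
    [AddCommGroup V] [Module K V] [FiniteDimensional K V] {w : ι → V}
    (hw : span K (Set.range w) = ⊤) {n : ℕ} (hn : finrank K V = n) :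
    ∃ s : Fin n → ι, LinearIndependent K (w ∘ s) := by
  obtain ⟨κ, a, -, hspan, hli⟩ := exists_linearIndependent' K w
  let b : Basis κ K V := Basis.mk hli (by rw [hspan, hw])
  have : Finite κ := Module.Finite.finite_basis b
  have : Fintype κ := Fintype.ofFinite κ
  let e := Fintype.equivFinOfCardEq ((finrank_eq_card_basis b).symm.trans hn)
  exact ⟨a ∘ e.symm, hli.comp e.symm e.symm.injective⟩

theorem exists_det_ne_zero_of_linearIndependent {K α : Type*} [Field K] {n : ℕ}
    {f : Fin n → α → K} (hf : LinearIndependent K f) :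
    ∃ s : Fin n → α, (Matrix.of fun i j => f i (s j)).det ≠ 0 := by
  obtain ⟨s, hs⟩ := exists_linearIndependent_comp_of_span_range_eq_top
    (span_flip_eq_top_iff_linearIndependent.mpr hf) (Module.finrank_fin_fun K)
  exact ⟨s, ((Matrix.isUnit_iff_isUnit_det _).mp
    (Matrix.linearIndependent_cols_iff_isUnit.mp hs)).ne_zero⟩

theorem linearIndependent_eval_of_linearIndependent {K ι : Type*} [Field K] [Infinite K]
    {v : ι → Polynomial K} (hv : LinearIndependent K v) :
    LinearIndependent K (fun i x => (v i).eval x) :=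
  hv.map' (LinearMap.pi Polynomial.leval)
    (LinearMap.ker_eq_bot.mpr fun _ _ hpq => Polynomial.funext (congrFun hpq))

theorem det_aeval_X_ne_zero {K : Type*} [Field K] [Infinite K] {n : ℕ}
    {v : Fin n → Polynomial K} (hv : LinearIndependent K v) :
    (Matrix.of fun i j => Polynomial.aeval (X j : MvPolynomial (Fin n) K) (v i)).det ≠ 0 := by
  obtain ⟨s, hs⟩ := exists_det_ne_zero_of_linearIndependent
    (linearIndependent_eval_of_linearIndependent hv)
  have heval : ∀ i j, aeval s (Polynomial.aeval (X j) (v i)) = (v i).eval (s j) := fun i j => by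
    rw [← Polynomial.aeval_algHom_apply, aeval_X, Polynomial.coe_aeval_eq_eval]
  intro h
  have hdet := congrArg (aeval s) h
  rw [AlgHom.map_det, map_zero] at hdet
  refine hs (Eq.trans ?_ hdet)
  congr 1
  ext i j
  exact (heval i j).symm

/-- If `v 1, …, v p ∈ ℝ[a]` are `ℝ`-linearly independent univariate polynomials, then the
determinant of the `p × p` matrix with `(i,j)` entry `v i (a j)` is a nonzero polynomial
in `ℝ[a₁,…,a_p]`. -/
theorem stmt_9 (p : ℕ) (v : Fin p → Polynomial ℝ) (hli : LinearIndependent ℝ v) :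
    Matrix.det (Matrix.of fun i j : Fin p =>
      Polynomial.aeval (X j : MvPolynomial (Fin p) ℝ) (v i)) ≠ 0 :=
  det_aeval_X_ne_zero hli
end

section
/- Let 0 ≤ n_1 < n_2 < ⋯ < n_p be integers. Then the determinant of the p×p generalized Vandermonde matrix whose (i,j) entry is a_j^{n_i} is a nonzero polynomial in ℝ[a_1, a_2, …, a_p]. -/
open MvPolynomial

lemma prod_X_pow_mono (p : ℕ) (f : Fin p → ℕ) :
    (∏ i : Fin p, (X i : MvPolynomial (Fin p) ℝ) ^ f i) =
      monomial (∑ i : Fin p, Finsupp.single i (f i)) 1 := by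
  rw [monomial_sum_one]
  exact Finset.prod_congr rfl fun i _ => X_pow_eq_monomial

lemma single_sum_inj (p : ℕ) (f g : Fin p → ℕ)
    (h : (∑ i : Fin p, Finsupp.single i (f i)) = ∑ i : Fin p, Finsupp.single i (g i)) :
    f = g := by
  funext j
  have := congrArg (fun s : Fin p →₀ ℕ => s j) h
  simpa [Finsupp.single_apply, Finset.sum_ite_eq] using this

/-- **Generalized Vandermonde determinant.** For integers `n 1 < n 2 < ⋯ < n p`, the
determinant of the `p × p` matrix with `(i,j)` entry `a j ^ (n i)` is a nonzero polynomial
in `ℝ[a₁,…,a_p]`. -/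
theorem stmt_10 (p : ℕ) (n : Fin p → ℕ) (hn : StrictMono n) :
    Matrix.det (Matrix.of fun i j : Fin p => (X j : MvPolynomial (Fin p) ℝ) ^ n i) ≠ 0 := by
  have key : coeff (∑ i : Fin p, Finsupp.single i (n i))
      (Matrix.det (Matrix.of fun i j : Fin p => (X j : MvPolynomial (Fin p) ℝ) ^ n i)) = 1 := by
    rw [Matrix.det_apply, coeff_sum]
    have hterm : ∀ σ : Equiv.Perm (Fin p),
        coeff (∑ i : Fin p, Finsupp.single i (n i))
          ((Equiv.Perm.sign σ : ℤ) • ∏ i : Fin p,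
            (Matrix.of fun i j : Fin p => (X j : MvPolynomial (Fin p) ℝ) ^ n i) (σ i) i) =
          if σ = 1 then 1 else 0 := by
      intro σ
      have hprod : (∏ i : Fin p,
          (Matrix.of fun i j : Fin p => (X j : MvPolynomial (Fin p) ℝ) ^ n i) (σ i) i) =
          monomial (∑ i : Fin p, Finsupp.single i (n (σ i))) 1 := by
        simpa using prod_X_pow_mono p (fun i => n (σ i))
      rw [hprod, coeff_smul, coeff_monomial]
      by_cases hσ : σ = 1
      · subst hσ; simp
      · rw [if_neg, if_neg hσ]
        · simp
        · intro h
          apply hσ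
          have := single_sum_inj p (fun i => n (σ i)) n h
          exact Equiv.ext fun i => hn.injective (congrFun this i)
    calc (∑ σ : Equiv.Perm (Fin p), coeff (∑ i : Fin p, Finsupp.single i (n i))
          ((Equiv.Perm.sign σ : ℤ) • ∏ i : Fin p,
            (Matrix.of fun i j : Fin p => (X j : MvPolynomial (Fin p) ℝ) ^ n i) (σ i) i))
        = ∑ σ : Equiv.Perm (Fin p), if σ = 1 then (1 : ℝ) else 0 :=
          Finset.sum_congr rfl fun σ _ => hterm σ
      _ = 1 := by simp
  intro h
  rw [h] at key
  simp at key
end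

section
/- For every n ∈ ℕ and p ≥ 1, with σ̂(ζ) = (1+ζ)^n, the ℝ-linear span of the set {σ̂(qᵀz) : q ∈ ℝ^p}, viewed inside the polynomial ring ℝ[z_1, …, z_p] (where σ̂(qᵀz) = (1 + q_1 z_1 + ⋯ + q_p z_p)^n), equals the space of all polynomials in z_1, …, z_p of total degree at most n. -/
/-!
By the multinomial theorem the coefficient of `z^α` in `(1 + q₁z₁ + ⋯ + q_pz_p)^n` is
`(n choose |α|) · multinomial(α) · q^α`: it vanishes for `|α| > n` and is a nonzero multiple of
`q^α` otherwise. Hence for a linear functional `f` that kills every such power, the polynomial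
`∑_{|α| ≤ n} (n choose |α|) multinomial(α) f(z^α) q^α` vanishes at every `q`, so it is zero and
`f(z^α) = 0` whenever `|α| ≤ n`. Since a subspace is the common kernel of its annihilator, every
monomial of degree at most `n` lies in the span.
-/

open MvPolynomial

namespace MvPolynomial

theorem linearMap_apply_eq_sum_of_support_subset {σ R M : Type*} [CommSemiring R]
    [AddCommMonoid M] [Module R M] (f : MvPolynomial σ R →ₗ[R] M) {P : MvPolynomial σ R}
    {D : Finset (σ →₀ ℕ)} (hD : P.support ⊆ D) :
    f P = ∑ t ∈ D, coeff t P • f (monomial t 1) := by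
  conv_lhs => rw [P.as_sum, Finset.sum_subset hD (fun t _ ht => by
    rw [notMem_support_iff.mp ht, monomial_zero])]
  rw [map_sum]
  refine Finset.sum_congr rfl fun t _ => ?_
  rw [← map_smul f, smul_monomial, smul_eq_mul, mul_one]

variable {σ : Type*} [Fintype σ]

theorem coeff_one_add_sum_C_mul_X_pow {R : Type*} [CommSemiring R] (a : σ → R) (n : ℕ)
    (s : σ →₀ ℕ) :
    coeff s ((1 + ∑ i, C (a i) * X i) ^ n) =
      if s.degree ≤ n then
        ((n.choose s.degree * s.multinomial : ℕ) : R) * s.prod (fun i m => a i ^ m)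
      else 0 := by
  simp_rw [← smul_eq_C_mul]
  rw [add_comm, add_pow, coeff_sum]
  simp only [one_pow, mul_one, ← C_eq_coe_nat, mul_comm _ (C _), coeff_C_mul,
    coeff_linearCombination_X_pow_of_fintype, mul_ite, mul_zero, Finset.sum_ite_eq,
    Finset.mem_range, Nat.lt_succ_iff, Nat.cast_mul, mul_assoc]
  rfl

theorem one_add_sum_C_mul_X_pow_mem_restrictTotalDegree {R : Type*} [CommSemiring R]
    (a : σ → R) (n : ℕ) :
    (1 + ∑ i, C (a i) * X i) ^ n ∈ restrictTotalDegree σ R n := by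
  rw [restrictTotalDegree, mem_restrictSupport_iff]
  intro s hs
  by_contra hdeg
  exact (mem_support_iff.mp hs) (by rw [coeff_one_add_sum_C_mul_X_pow]; exact if_neg hdeg)

theorem apply_monomial_eq_zero_of_forall_apply_one_add_sum_C_mul_X_pow {K : Type*} [Field K]
    [CharZero K] (f : Module.Dual K (MvPolynomial σ K)) {n : ℕ}
    (hf : ∀ a : σ → K, f ((1 + ∑ i, C (a i) * X i) ^ n) = 0) {s : σ →₀ ℕ} (hs : s.degree ≤ n) :
    f (monomial s 1) = 0 := by
  set D := (Finsupp.finite_of_degree_le (σ := σ) n).toFinset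
  have mem_D (t : σ →₀ ℕ) : t ∈ D ↔ t.degree ≤ n := Set.Finite.mem_toFinset _
  set c : (σ →₀ ℕ) → K := fun t => ((n.choose t.degree * t.multinomial : ℕ) : K)
  set G := ∑ t ∈ D, monomial t (c t * f (monomial t 1))
  have hG : G = 0 := MvPolynomial.funext fun a => by
    have hsupp : ((1 + ∑ i, C (a i) * X i) ^ n).support ⊆ D := fun t ht =>
      (mem_D t).2 ((mem_restrictSupport_iff K).mp
        (one_add_sum_C_mul_X_pow_mem_restrictTotalDegree a n) ht)
    rw [map_zero, ← hf a, linearMap_apply_eq_sum_of_support_subset f hsupp, map_sum]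
    refine Finset.sum_congr rfl fun t ht => ?_
    rw [eval_monomial, coeff_one_add_sum_C_mul_X_pow, if_pos ((mem_D t).1 ht), smul_eq_mul]
    ring
  have hc : c s ≠ 0 := Nat.cast_ne_zero.mpr <| mul_ne_zero (Nat.choose_pos hs).ne'
    (s.multinomial_eq ▸ Nat.multinomial_pos _ _).ne'
  have hcoeff : coeff s G = c s * f (monomial s 1) := by
    classical
    simp only [G, coeff_sum, coeff_monomial, Finset.sum_ite_eq', mem_D, hs, if_true]
  exact (mul_eq_zero.mp (hcoeff ▸ hG ▸ coeff_zero s)).resolve_left hc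

theorem span_one_add_sum_C_mul_X_pow_eq_restrictTotalDegree (K : Type*) [Field K] [CharZero K]
    (n : ℕ) :
    Submodule.span K {P : MvPolynomial σ K | ∃ q : σ → K, P = (1 + ∑ i, C (q i) * X i) ^ n}
      = restrictTotalDegree σ K n := by
  refine le_antisymm (Submodule.span_le.mpr ?_) ?_
  · rintro _ ⟨q, rfl⟩
    exact one_add_sum_C_mul_X_pow_mem_restrictTotalDegree q n
  · rw [restrictTotalDegree, restrictSupport_eq_span, Submodule.span_le]
    rintro _ ⟨s, hs, rfl⟩
    rw [SetLike.mem_coe, ← Subspace.forall_mem_dualAnnihilator_apply_eq_zero_iff]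
    intro f hf
    rw [Submodule.mem_dualAnnihilator] at hf
    exact apply_monomial_eq_zero_of_forall_apply_one_add_sum_C_mul_X_pow f
      (fun q => hf _ (Submodule.subset_span ⟨q, rfl⟩)) hs

end MvPolynomial

theorem stmt_12_general (p n : ℕ) :
    Submodule.span ℝ {P : MvPolynomial (Fin p) ℝ |
        ∃ q : Fin p → ℝ, P = (1 + ∑ i : Fin p, C (q i) * X i) ^ n}
      = restrictTotalDegree (Fin p) ℝ n :=
  span_one_add_sum_C_mul_X_pow_eq_restrictTotalDegree ℝ n

/-- For every `n ∈ ℕ` and `p ≥ 1`, with `σ̂(ζ) = (1+ζ)^n`, the `ℝ`-linear span of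
`{σ̂(qᵀz) : q ∈ ℝ^p}` inside `ℝ[z₁,…,z_p]` equals the space of all polynomials of total
degree at most `n`. -/
theorem stmt_12 (p n : ℕ) (hp : 1 ≤ p) :
    Submodule.span ℝ {P : MvPolynomial (Fin p) ℝ |
        ∃ q : Fin p → ℝ, P = (1 + ∑ i : Fin p, C (q i) * X i) ^ n}
      = restrictTotalDegree (Fin p) ℝ n :=
  stmt_12_general p n
end

section
/- Let d, p, L ∈ ℕ with L ≥ 1, let V ⊂ ℝ^d be a subspace with orthonormal basis e_1, …, e_p, let h*:V→ℝ be a polynomial and f*(x)=h*(x_V) (x_V the orthogonal projection onto V), let σ ∈ C^L(ℝ) and m_l = σ^{(l)}(0). Suppose Q̂ : [0,∞) → ℝ^{p×L} is differentiable, Q̂(0)=0, and for all t ≥ 0 and 1 ≤ i ≤ p: (d/dt)Q̂_{i,1}(t) = E_{x∼N(0,I_d)}[x_i·f*(x)·m_1], and for 2 ≤ j ≤ L, (d/dt)Q̂_{i,j}(t) = E_{x∼N(0,I_d)}[ x_i·f*(x)·Σ_{l=1}^{L−1} (m_{l+1}/l!)·Σ_{1≤i_1,…,i_l≤p} Σ_{j_1+⋯+j_l=j−1,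 j_s≥1} ∏_{s=1}^l Q̂_{i_s,j_s}(t)·x_{i_s} ], where x_i = e_iᵀx. Then for every i, j there exists a constant q̂_{i,j} ∈ ℝ (depending only on h* and σ) such that Q̂_{i,j}(t) = q̂_{i,j}·t^{j} for all t ≥ 0. -/
open MeasureTheory Real RealInnerProductSpace

noncomputable section

abbrev Eu (d : ℕ) : Type := EuclideanSpace ℝ (Fin d)

/-- Centered isotropic Gaussian measure on `ℝ^d` with covariance `c • I_d`. -/
def gaussCov (d : ℕ) (c : ℝ) : Measure (Eu d) :=
  volume.withDensity fun x =>
    ENNReal.ofReal ((2 * π * c) ^ (-(d : ℝ) / 2) * Real.exp (-‖x‖ ^ 2 / (2 * c)))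

/-- The standard Gaussian measure `N(0, I_d)` on `ℝ^d`. -/
def stdGauss (d : ℕ) : Measure (Eu d) := gaussCov d 1

/-- Orthogonal projection onto a subspace, viewed as a map of the ambient space. -/
def projSub {d : ℕ} (S : Submodule ℝ (Eu d)) (x : Eu d) : Eu d :=
  (S.orthogonalProjection x : Eu d)

/-- Standard Gaussian of a subspace `S`, i.e. the law of the orthogonal projection onto `S`
of a standard Gaussian of the ambient space. -/
def gaussOn {d : ℕ} (S : Submodule ℝ (Eu d)) : Measure (Eu d) :=
  (stdGauss d).map (projSub S)

/-- Mean-field two-layer network. -/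
def fNN {d : ℕ} (σ : ℝ → ℝ) (ρ : Measure (ℝ × Eu d)) (x : Eu d) : ℝ :=
  ∫ θ, θ.1 * σ ⟪θ.2, x⟫ ∂ρ

/-- The loss functional. -/
def loss {d : ℕ} (σ : ℝ → ℝ) (fs : Eu d → ℝ) (ρ : Measure (ℝ × Eu d)) : ℝ :=
  (1 / 2) * ∫ x, (fs x - fNN σ ρ x) ^ 2 ∂stdGauss d

def Phi {d : ℕ} (σ : ℝ → ℝ) (fs : Eu d → ℝ) (ρ : Measure (ℝ × Eu d)) (θ : ℝ × Eu d) : ℝ :=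
  θ.1 * ∫ x, (fNN σ ρ x - fs x) * σ ⟪θ.2, x⟫ ∂stdGauss d

/-- `∂_a Φ`. -/
def PhiA {d : ℕ} (σ : ℝ → ℝ) (fs : Eu d → ℝ) (ρ : Measure (ℝ × Eu d)) (θ : ℝ × Eu d) : ℝ :=
  deriv (fun a => Phi σ fs ρ (a, θ.2)) θ.1

/-- `∇_w Φ`. -/
def PhiW {d : ℕ} (σ : ℝ → ℝ) (fs : Eu d → ℝ) (ρ : Measure (ℝ × Eu d)) (θ : ℝ × Eu d) : Eu d :=
  gradient (fun w => Phi σ fs ρ (θ.1, w)) θ.2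

/-- Weak solution of the mean-field flow `∂_t ρ_t = ∇_θ · (ρ_t ξ(t) ∇_θ Φ(θ; ρ_t))`. -/
def IsWeakSolution {d : ℕ} (σ : ℝ → ℝ) (fs : Eu d → ℝ) (ξa ξw : ℝ → ℝ)
    (ρ : ℝ → Measure (ℝ × Eu d)) (ρ0 : Measure (ℝ × Eu d)) : Prop :=
  ρ 0 = ρ0 ∧
  ∀ η : (ℝ × Eu d) × ℝ → ℝ, ContDiff ℝ (⊤ : ℕ∞) η → HasCompactSupport η →
    tsupport η ⊆ Set.univ ×ˢ Set.Ioi (0 : ℝ) →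
    ∫ t in Set.Ioi (0 : ℝ), (∫ θ,
        (-(deriv (fun s => η (θ, s)) t)
          + ξa t * deriv (fun a => η ((a, θ.2), t)) θ.1 * PhiA σ fs (ρ t) θ
          + ξw t * ⟪gradient (fun w => η ((θ.1, w), t)) θ.2, PhiW σ fs (ρ t) θ⟫) ∂(ρ t)) = 0

/-- Assumption A: regularity/boundedness of the activation and learning rates, and
properties of the first-layer initialization `ρa`. -/
def AssumptionA (σ ξa ξw : ℝ → ℝ) (Kσ Kξ Kρ : ℝ) (ρa : Measure ℝ) : Prop :=
  ContDiff ℝ 2 σ ∧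
  (∀ x, |σ x| ≤ Kσ ∧ |deriv σ x| ≤ Kσ ∧ |deriv (deriv σ) x| ≤ Kσ) ∧
  (∀ t, 0 ≤ ξa t ∧ ξa t ≤ Kξ ∧ 0 ≤ ξw t ∧ ξw t ≤ Kξ) ∧
  (∃ K : NNReal, LipschitzWith K ξa ∧ LipschitzWith K ξw) ∧
  (∫⁻ t in Set.Ioi (0 : ℝ), ENNReal.ofReal (ξa t) = ⊤) ∧
  (∫⁻ t in Set.Ioi (0 : ℝ), ENNReal.ofReal (ξw t) = ⊤) ∧
  IsProbabilityMeasure ρa ∧ ρa.map (fun a => -a) = ρa ∧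
  ρa (Set.Icc (-Kρ) Kρ)ᶜ = 0

/-- A function on `ℝ^p` is a polynomial function. -/
def IsPolyFun {p : ℕ} (h : Eu p → ℝ) : Prop :=
  ∃ P : MvPolynomial (Fin p) ℝ, ∀ z, h z = MvPolynomial.eval (fun i => z i) P

/-- Squared 2-Wasserstein-type distance from the paper: infimum over couplings of
`∬ (|a-ã|² + ‖w-w̃‖²) dγ`. -/
def W2sq {d : ℕ} (μ ν : Measure (ℝ × Eu d)) : ℝ :=
  sInf { r : ℝ | ∃ γ : Measure ((ℝ × Eu d) × (ℝ × Eu d)),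
    γ.map Prod.fst = μ ∧ γ.map Prod.snd = ν ∧
    r = ∫ q, ((q.1.1 - q.2.1) ^ 2 + ‖q.1.2 - q.2.2‖ ^ 2) ∂γ }

/-- The subspace-sparse target `f*(x) = h*(x_V)`, where `h*` on `V` is obtained from a
polynomial `h` on `ℝ^p` through a linear isometry `φ : ℝ^p ≃ V`. -/
def pullTarget {p d : ℕ} (V : Submodule ℝ (Eu d)) (φ : Eu p ≃ₗᵢ[ℝ] V)
    (h : Eu p → ℝ) : Eu d → ℝ :=
  fun x => h (φ.symm (V.orthogonalProjection x))

end

noncomputable section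

open MeasureTheory Real RealInnerProductSpace

lemma aux_monomial (f : ℝ → ℝ) (c : ℝ) (n : ℕ) (hf0 : f 0 = 0)
    (hf : ∀ t ∈ Set.Ici (0:ℝ), HasDerivWithinAt f (c * t ^ n) (Set.Ici 0) t) :
    ∀ t ∈ Set.Ici (0:ℝ), f t = (c / (n+1)) * t ^ (n+1) := by
  intro t ht
  set g : ℝ → ℝ := fun s => f s - (c / (n+1)) * s ^ (n+1) with hg
  have hgd : ∀ s ∈ Set.Ici (0:ℝ), HasDerivWithinAt g 0 (Set.Ici 0) s := by
    intro s hs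
    have h1 : HasDerivWithinAt (fun s : ℝ => (c / (n+1)) * s ^ (n+1))
        ((c / (n+1)) * ((n+1) * s ^ n)) (Set.Ici 0) s := by
      have := (hasDerivAt_pow (n+1) s).const_mul (c / (n+1))
      simpa using this.hasDerivWithinAt
    have := (hf s hs).sub h1
    have hne : ((n:ℝ)+1) ≠ 0 := by positivity
    have e0 : c * s ^ n - c / ((n:ℝ) + 1) * (((n:ℝ) + 1) * s ^ n) = 0 := by
      rw [← mul_assoc, div_mul_cancel₀ _ hne]
      ring
    rw [e0] at this
    exact this
  have hcont : ContinuousOn g (Set.Icc 0 t) := by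
    intro s hs
    exact ((hgd s (Set.mem_Icc.mp hs).1).continuousWithinAt).mono
      (fun y hy => (Set.mem_Icc.mp hy).1)
  have := constant_of_has_deriv_right_zero hcont (fun s hs =>
    (hgd s (Set.mem_Ico.mp hs).1).mono (Set.Ici_subset_Ici.mpr (Set.mem_Ico.mp hs).1))
  have hgt := this t (Set.mem_Icc.mpr ⟨ht, le_refl t⟩)
  simp [hg, hf0] at hgt
  linarith [hgt]

/-- **Structure of the approximate coefficient dynamics (Proposition C.4).**
Let `e₁,…,e_p` be an orthonormal basis of a subspace `V ⊆ ℝ^d`, let `f*` be a polynomial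
function with `f*(x) = h*(x_V)`, let `σ ∈ C^L(ℝ)` with `m_l = σ^{(l)}(0)`, and suppose
`Q̂ : [0,∞) → ℝ^{p×L}` satisfies `Q̂(0) = 0` together with the coefficient ODE system
(the variable `j ∈ {1,…,L}`, and the inner sum ranges over compositions of `j−1` into `l`
positive parts and tuples of indices in `{1,…,p}`). Then for all `i, j` there is a
constant `q̂_{i,j}` with `Q̂_{i,j}(t) = q̂_{i,j}·t^j` for all `t ≥ 0`. -/
theorem stmt_14 (d p L : ℕ) (hL : 1 ≤ L)
    (V : Submodule ℝ (Eu d)) (e : Fin p → Eu d)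
    (he : Orthonormal ℝ e) (heV : ∀ i, e i ∈ V)
    (hspan : Submodule.span ℝ (Set.range e) = V)
    (fs : Eu d → ℝ) (hfs : IsPolyFun fs) (hfsV : ∀ x, fs x = fs (projSub V x))
    (σ : ℝ → ℝ) (hσ : ContDiff ℝ (L : ℕ∞) σ)
    (Q : ℝ → Fin p → ℕ → ℝ) (hQ0 : ∀ i j, Q 0 i j = 0)
    (hQ1 : ∀ i, ∀ t ∈ Set.Ici (0 : ℝ),
      HasDerivWithinAt (fun s => Q s i 1)
        (∫ x, ⟪e i, x⟫ * fs x * iteratedDeriv 1 σ 0 ∂stdGauss d) (Set.Ici 0) t)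
    (hQj : ∀ i, ∀ j, 2 ≤ j → j ≤ L → ∀ t ∈ Set.Ici (0 : ℝ),
      HasDerivWithinAt (fun s => Q s i j)
        (∫ x, ⟪e i, x⟫ * fs x *
          (∑ l ∈ Finset.Icc 1 (L - 1), (iteratedDeriv (l + 1) σ 0 / (Nat.factorial l)) *
            (∑ ii : Fin l → Fin p,
              ∑ jj ∈ Finset.univ.filter
                  (fun jj : Fin l → Fin (L + 1) =>
                    (∑ s', ((jj s' : ℕ))) = j - 1 ∧ ∀ s', 1 ≤ ((jj s' : ℕ))),
                ∏ s', (Q t (ii s') ((jj s' : ℕ)) * ⟪e (ii s'), x⟫))) ∂stdGauss d)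
        (Set.Ici 0) t) :
    ∀ i, ∀ j, 1 ≤ j → j ≤ L →
      ∃ q : ℝ, ∀ t ∈ Set.Ici (0 : ℝ), Q t i j = q * t ^ j := by
  intro i j
  induction j using Nat.strong_induction_on generalizing i with
  | _ j IH =>
  intro hj1 hjL
  rcases eq_or_lt_of_le hj1 with h1 | h2
  · -- j = 1
    subst h1
    set c := ∫ x, ⟪e i, x⟫ * fs x * iteratedDeriv 1 σ 0 ∂stdGauss d with hc
    refine ⟨c, ?_⟩
    have := aux_monomial (fun s => Q s i 1) c 0 (hQ0 i 1)
      (fun t ht => by rw [pow_zero, mul_one]; exact hQ1 i t ht)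
    intro t ht
    simpa using this t ht
  · -- j ≥ 2
    have hj2 : 2 ≤ j := h2
    -- choice of coefficients for smaller j
    have hch : ∀ i' : Fin p, ∀ j' : ℕ, ∃ q : ℝ, (j' < j → 1 ≤ j' → j' ≤ L →
        ∀ t ∈ Set.Ici (0:ℝ), Q t i' j' = q * t ^ j') := by
      intro i' j'
      by_cases h : j' < j ∧ 1 ≤ j' ∧ j' ≤ L
      · obtain ⟨q, hq⟩ := IH j' h.1 i' h.2.1 h.2.2
        exact ⟨q, fun _ _ _ => hq⟩
      · exact ⟨0, fun ha hb hcc => absurd ⟨ha, hb, hcc⟩ h⟩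
    choose q hq using hch
    set C := ∫ x, ⟪e i, x⟫ * fs x *
        (∑ l ∈ Finset.Icc 1 (L - 1), (iteratedDeriv (l + 1) σ 0 / (Nat.factorial l)) *
          (∑ ii : Fin l → Fin p,
            ∑ jj ∈ Finset.univ.filter
                (fun jj : Fin l → Fin (L + 1) =>
                  (∑ s', ((jj s' : ℕ))) = j - 1 ∧ ∀ s', 1 ≤ ((jj s' : ℕ))),
              ∏ s', (q (ii s') ((jj s' : ℕ)) * ⟪e (ii s'), x⟫))) ∂stdGauss d with hC
    have hder : ∀ t ∈ Set.Ici (0:ℝ), HasDerivWithinAt (fun s => Q s i j)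
        (C * t ^ (j-1)) (Set.Ici 0) t := by
      intro t ht
      have key : (∫ x, ⟪e i, x⟫ * fs x *
          (∑ l ∈ Finset.Icc 1 (L - 1), (iteratedDeriv (l + 1) σ 0 / (Nat.factorial l)) *
            (∑ ii : Fin l → Fin p,
              ∑ jj ∈ Finset.univ.filter
                  (fun jj : Fin l → Fin (L + 1) =>
                    (∑ s', ((jj s' : ℕ))) = j - 1 ∧ ∀ s', 1 ≤ ((jj s' : ℕ))),
                ∏ s', (Q t (ii s') ((jj s' : ℕ)) * ⟪e (ii s'), x⟫))) ∂stdGauss d)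
          = C * t ^ (j-1) := by
        have hfun : ∀ x : Eu d, ⟪e i, x⟫ * fs x *
            (∑ l ∈ Finset.Icc 1 (L - 1), (iteratedDeriv (l + 1) σ 0 / (Nat.factorial l)) *
              (∑ ii : Fin l → Fin p,
                ∑ jj ∈ Finset.univ.filter
                    (fun jj : Fin l → Fin (L + 1) =>
                      (∑ s', ((jj s' : ℕ))) = j - 1 ∧ ∀ s', 1 ≤ ((jj s' : ℕ))),
                  ∏ s', (Q t (ii s') ((jj s' : ℕ)) * ⟪e (ii s'), x⟫)))
            = t ^ (j-1) * (⟪e i, x⟫ * fs x *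
            (∑ l ∈ Finset.Icc 1 (L - 1), (iteratedDeriv (l + 1) σ 0 / (Nat.factorial l)) *
              (∑ ii : Fin l → Fin p,
                ∑ jj ∈ Finset.univ.filter
                    (fun jj : Fin l → Fin (L + 1) =>
                      (∑ s', ((jj s' : ℕ))) = j - 1 ∧ ∀ s', 1 ≤ ((jj s' : ℕ))),
                  ∏ s', (q (ii s') ((jj s' : ℕ)) * ⟪e (ii s'), x⟫)))) := by
          intro x
          have hsum : (∑ l ∈ Finset.Icc 1 (L - 1), (iteratedDeriv (l + 1) σ 0 / (Nat.factorial l)) *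
              (∑ ii : Fin l → Fin p,
                ∑ jj ∈ Finset.univ.filter
                    (fun jj : Fin l → Fin (L + 1) =>
                      (∑ s', ((jj s' : ℕ))) = j - 1 ∧ ∀ s', 1 ≤ ((jj s' : ℕ))),
                  ∏ s', (Q t (ii s') ((jj s' : ℕ)) * ⟪e (ii s'), x⟫)))
              = t ^ (j-1) * (∑ l ∈ Finset.Icc 1 (L - 1),
                  (iteratedDeriv (l + 1) σ 0 / (Nat.factorial l)) *
                (∑ ii : Fin l → Fin p,
                  ∑ jj ∈ Finset.univ.filter
                      (fun jj : Fin l → Fin (L + 1) =>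
                        (∑ s', ((jj s' : ℕ))) = j - 1 ∧ ∀ s', 1 ≤ ((jj s' : ℕ))),
                    ∏ s', (q (ii s') ((jj s' : ℕ)) * ⟪e (ii s'), x⟫))) := by
            rw [Finset.mul_sum]
            refine Finset.sum_congr rfl (fun l _ => ?_)
            rw [← mul_assoc, mul_comm (t ^ (j-1)), mul_assoc]
            congr 1
            rw [Finset.mul_sum]
            refine Finset.sum_congr rfl (fun ii _ => ?_)
            rw [Finset.mul_sum]
            refine Finset.sum_congr rfl (fun jj hjj => ?_)
            rw [Finset.mem_filter] at hjj
            obtain ⟨-, hsum', hge⟩ := hjj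
            have hprod : ∀ s' : Fin l, Q t (ii s') ((jj s' : ℕ))
                = q (ii s') ((jj s' : ℕ)) * t ^ ((jj s' : ℕ)) := by
              intro s'
              have hle : ((jj s' : ℕ)) ≤ j - 1 := by
                rw [← hsum']
                exact Finset.single_le_sum (f := fun s => ((jj s : ℕ)))
                  (fun s _ => Nat.zero_le _) (Finset.mem_univ s')
              have hlt : ((jj s' : ℕ)) < j := lt_of_le_of_lt hle (Nat.sub_lt
                (lt_of_lt_of_le Nat.zero_lt_two hj2) Nat.one_pos)
              exact hq (ii s') ((jj s' : ℕ)) hlt (hge s')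
                (le_trans hle (le_trans (Nat.sub_le j 1) hjL)) t ht
            calc (∏ s', (Q t (ii s') ((jj s' : ℕ)) * ⟪e (ii s'), x⟫))
                = ∏ s', (t ^ ((jj s' : ℕ)) *
                    (q (ii s') ((jj s' : ℕ)) * ⟪e (ii s'), x⟫)) := by
                  refine Finset.prod_congr rfl (fun s' _ => ?_)
                  rw [hprod s']; ring
              _ = (∏ s', t ^ ((jj s' : ℕ))) *
                    ∏ s', (q (ii s') ((jj s' : ℕ)) * ⟪e (ii s'), x⟫) :=
                  Finset.prod_mul_distrib
              _ = t ^ (j-1) * ∏ s', (q (ii s') ((jj s' : ℕ)) * ⟪e (ii s'), x⟫) := by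
                  rw [Finset.prod_pow_eq_pow_sum, hsum']
          rw [hsum]; ring
        calc _ = ∫ x, t ^ (j-1) * (⟪e i, x⟫ * fs x *
            (∑ l ∈ Finset.Icc 1 (L - 1), (iteratedDeriv (l + 1) σ 0 / (Nat.factorial l)) *
              (∑ ii : Fin l → Fin p,
                ∑ jj ∈ Finset.univ.filter
                    (fun jj : Fin l → Fin (L + 1) =>
                      (∑ s', ((jj s' : ℕ))) = j - 1 ∧ ∀ s', 1 ≤ ((jj s' : ℕ))),
                  ∏ s', (q (ii s') ((jj s' : ℕ)) * ⟪e (ii s'), x⟫)))) ∂stdGauss d := by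
              exact integral_congr_ae (Filter.Eventually.of_forall hfun)
          _ = t ^ (j-1) * C := by rw [hC, integral_const_mul]
          _ = C * t ^ (j-1) := mul_comm _ _
      exact key ▸ hQj i j hj2 hjL t ht
    refine ⟨C / ((j - 1 : ℕ) + 1), fun t ht => ?_⟩
    have := aux_monomial (fun s => Q s i j) C (j-1) (hQ0 i j) hder t ht
    have hj' : j - 1 + 1 = j := Nat.succ_pred_eq_of_pos (lt_of_lt_of_le Nat.zero_lt_one hj1)
    rw [hj'] at this
    exact this


end
end

section
/- Let h:ℝ^p→ℝ be a polynomial with Hermite decomposition h(z) = Σ_{i=1}^m c_i·∏_{j=1}^p He_{α_i(j)}(z_j), where c_1,…,c_m are nonzero real coefficients, α_1,…,α_m ∈ ℕ^p are pairwise distinct multi-indices, and He_k denotes the k-th probabilists' Hermite polynomial. Let J ⊆ {1,…,p} be nonempty and let S = span{e_j : j ∈ J} (coordinate subspace). Then the following are equivalent: (a) E_{z_S∼N(0,I_S)}[h(z)·z_S] = 0 (an identity in S) for every fixed value of the coordinates z_j with j ∉ J; (b) for every i ∈ {1,…,m}, Σ_{j∈J} α_i(j) ≠ 1. -/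
/-
Integrating out `z_J` against the standard Gaussian, orthogonality of the Hermite polynomials
(`∫ He_k He_l dγ = k! δ_kl`, with `He_0 = 1` and `He_1 = x`) kills every term of `h(z) z_{j₀}`
except those whose multi-index restricted to `J` is `e_{j₀}`, so the expectation equals
`∑_{α_i|_J = e_{j₀}} c_i ∏_{j ∉ J} He_{α_i(j)}(z_j)`. As `∑_{j ∈ J} α_i(j) = 1` exactly when
`α_i|_J = e_{j₀}` for some `j₀ ∈ J`, condition (b) makes all these sums empty. Conversely, the
surviving multi-indices are pairwise distinct off `J`, so integrating this polynomial in `z_{Jᶜ}`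
against `∏_{j ∉ J} He_{α_i(j)}(z_j)` isolates `c_i ∏_{j ∉ J} α_i(j)!`, which cannot vanish.
Orthogonality itself comes from Stein's identity `E[q'(x)] = E[x q(x)]` and
`He_{k+1} = x He_k - He_k'`.
-/

open MeasureTheory ProbabilityTheory Polynomial
open scoped NNReal Nat

lemma Finset.sum_eq_one_iff_exists_pi_single {ι : Type*} [DecidableEq ι] (J : Finset ι)
    (a : ι → ℕ) : ∑ j ∈ J, a j = 1 ↔ ∃ j₀ ∈ J, ∀ j ∈ J, a j = (Pi.single j₀ 1 : ι → ℕ) j := by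
  constructor
  · intro h
    obtain ⟨j₀, hj₀, hpos⟩ : ∃ j₀ ∈ J, a j₀ ≠ 0 := by
      by_contra! h0
      simp [Finset.sum_eq_zero h0] at h
    have hrest : ∑ j ∈ J.erase j₀, a j = 0 := by
      have := Finset.add_sum_erase J a hj₀
      omega
    refine ⟨j₀, hj₀, fun j hj => ?_⟩
    rcases eq_or_ne j j₀ with rfl | hne
    · have := Finset.add_sum_erase J a hj
      simp
      omega
    · rw [Pi.single_eq_of_ne hne]
      exact Finset.sum_eq_zero_iff.1 hrest j (Finset.mem_erase.2 ⟨hne, hj⟩)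
  · rintro ⟨j₀, hj₀, ha⟩
    rw [Finset.sum_congr rfl ha, Finset.sum_pi_single', if_pos hj₀]

namespace Polynomial

lemma derivative_hermite_succ (n : ℕ) :
    derivative (hermite (n + 1)) = (n + 1 : ℤ[X]) * hermite n := by
  induction n with
  | zero => simp
  | succ n ih =>
    rw [hermite_succ (n + 1), derivative_sub, derivative_mul, derivative_X, ih, derivative_mul,
      hermite_succ n]
    simp only [derivative_add, derivative_natCast, derivative_one, add_zero, zero_mul, zero_add]
    push_cast
    ring

end Polynomial

namespace MeasureTheory

variable {ι : Type*} [Fintype ι] {E : ι → Type*} [∀ j, MeasurableSpace (E j)]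
  {μ : ∀ j, Measure (E j)} [∀ j, IsProbabilityMeasure (μ j)] {𝕜 : Type*} [RCLike 𝕜]

lemma integral_finset_prod_eq_prod (K : Finset ι) (f : ∀ j, E j → 𝕜) :
    ∫ u, ∏ j ∈ K, f j (u j) ∂Measure.pi μ = ∏ j ∈ K, ∫ x, f j x ∂μ j := by
  classical
  have h := integral_fintype_prod_eq_prod (μ := μ) fun j x => if j ∈ K then f j x else 1
  rw [Finset.prod_congr rfl (g := fun j => if j ∈ K then ∫ x, f j x ∂μ j else 1)
    fun j _ => by split_ifs <;> simp] at h
  simpa using h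

lemma Integrable.finset_prod (K : Finset ι) {f : ∀ j, E j → 𝕜}
    (hf : ∀ j ∈ K, Integrable (f j) (μ j)) :
    Integrable (fun u => ∏ j ∈ K, f j (u j)) (Measure.pi μ) := by
  classical
  have h := Integrable.fintype_prod_dep (μ := μ) (f := fun j x => if j ∈ K then f j x else 1)
    fun j => by by_cases hj : j ∈ K <;> simp [hj, hf]
  simpa using h

end MeasureTheory

namespace ProbabilityTheory

variable {R : Type*} [CommRing R] [Algebra R ℝ]

lemma integrable_aeval_gaussianReal (μ : ℝ) (v : ℝ≥0) (q : R[X]) :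
    Integrable (fun x => aeval x q) (gaussianReal μ v) := by
  simp_rw [aeval_eq_sum_range, Algebra.smul_def]
  exact integrable_finsetSum _ fun n _ =>
    (integrable_pow_of_mem_interior_integrableExpSet (X := id) (by simp) n).const_mul _

lemma integrable_gaussianPDFReal_mul {μ : ℝ} {v : ℝ≥0} (hv : v ≠ 0) {f : ℝ → ℝ}
    (hf : Integrable f (gaussianReal μ v)) :
    Integrable (fun x => gaussianPDFReal μ v x * f x) := by
  rw [gaussianReal_of_var_ne_zero μ hv, integrable_withDensity_iff_integrable_smul'
    (measurable_gaussianPDF μ v) (ae_of_all _ fun _ => gaussianPDF_lt_top)] at hf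
  simpa [toReal_gaussianPDF] using hf

lemma hasDerivAt_gaussianPDFReal (μ : ℝ) (v : ℝ≥0) (x : ℝ) :
    HasDerivAt (gaussianPDFReal μ v) (-((x - μ) / v) * gaussianPDFReal μ v x) x := by
  have hexponent : HasDerivAt (fun y => -(y - μ) ^ 2 / (2 * v)) (-((x - μ) / v)) x :=
    ((((hasDerivAt_id' x).sub_const μ).pow 2).neg.div_const (2 * (v : ℝ))).congr_deriv (by ring)
  exact (hexponent.exp.const_mul _).congr_deriv (by rw [gaussianPDFReal]; ring)

lemma integral_aeval_derivative_gaussianReal (q : R[X]) :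
    ∫ x, aeval x (derivative q) ∂gaussianReal 0 1 = ∫ x, x * aeval x q ∂gaussianReal 0 1 := by
  have hint (r : R[X]) := integrable_aeval_gaussianReal 0 1 r
  simp_rw [show ∀ x : ℝ, x * aeval x q = aeval x (X * q) by simp]
  rw [← sub_eq_zero, ← integral_sub (hint _) (hint _)]
  simp_rw [← map_sub]
  rw [integral_gaussianReal_eq_integral_smul one_ne_zero]
  refine integral_eq_zero_of_hasDerivAt_of_integrable (fun x => ?_)
    (integrable_gaussianPDFReal_mul one_ne_zero (hint _))
    (integrable_gaussianPDFReal_mul one_ne_zero (hint q))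
  refine ((hasDerivAt_gaussianPDFReal 0 1 x).mul (q.hasDerivAt_aeval x)).congr_deriv ?_
  simp only [smul_eq_mul, map_sub, map_mul, aeval_X, sub_zero, NNReal.coe_one, div_one]
  ring

lemma integral_aeval_mul_derivative_gaussianReal (q r : R[X]) :
    ∫ x, aeval x (X * q - derivative q) * aeval x r ∂gaussianReal 0 1
      = ∫ x, aeval x q * aeval x (derivative r) ∂gaussianReal 0 1 := by
  have hint (s : R[X]) := integrable_aeval_gaussianReal 0 1 s
  have hleibniz :
      (X * q - derivative q) * r = X * (q * r) - derivative (q * r) + q * derivative r := by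
    rw [derivative_mul]
    ring
  simp_rw [← map_mul, hleibniz, map_add, map_sub]
  rw [integral_add ?_ (hint _), integral_sub (hint _) (hint _),
    integral_aeval_derivative_gaussianReal]
  · simp
  · exact (hint _).sub (hint _)

lemma integral_hermite_succ_mul_gaussianReal (n : ℕ) (r : ℤ[X]) :
    ∫ x, aeval x (hermite (n + 1)) * aeval x r ∂gaussianReal 0 1
      = ∫ x, aeval x (hermite n) * aeval x (derivative r) ∂gaussianReal 0 1 := by
  rw [hermite_succ]
  exact integral_aeval_mul_derivative_gaussianReal _ _

theorem integral_hermite_mul_hermite_gaussianReal (k l : ℕ) :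
    ∫ x, aeval x (hermite k) * aeval x (hermite l) ∂gaussianReal 0 1
      = if k = l then (k ! : ℝ) else 0 := by
  induction k generalizing l with
  | zero =>
    cases l with
    | zero => simp
    | succ l =>
      simp_rw [mul_comm (aeval _ (hermite 0)), integral_hermite_succ_mul_gaussianReal]
      simp
  | succ k ih =>
    cases l with
    | zero => rw [integral_hermite_succ_mul_gaussianReal]; simp
    | succ l =>
      simp_rw [integral_hermite_succ_mul_gaussianReal, derivative_hermite_succ, map_mul, map_add,
        map_natCast, map_one, mul_left_comm _ ((l : ℝ) + 1), integral_const_mul, ih, add_left_inj]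
      split_ifs with hkl
      · subst hkl
        push_cast [Nat.factorial_succ]
        ring
      · simp

lemma prod_aeval_hermite_pi_single {ι : Type*} [DecidableEq ι] {J : Finset ι} {j₀ : ι}
    (hj₀ : j₀ ∈ J) (u : ι → ℝ) :
    ∏ j ∈ J, aeval (u j) (hermite ((Pi.single j₀ 1 : ι → ℕ) j)) = u j₀ := by
  rw [Finset.prod_eq_single_of_mem j₀ hj₀ fun j _ hj => by simp [hj]]
  simp

section HermiteProduct

variable {ι κ : Type*} [Fintype ι] [Fintype κ]

lemma integrable_hermite_mul_hermite_gaussianReal (k l : ℕ) :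
    Integrable (fun x => aeval x (hermite k) * aeval x (hermite l)) (gaussianReal 0 1) := by
  simpa using integrable_aeval_gaussianReal 0 1 (hermite k * hermite l)

theorem integral_pi_prod_hermite_mul_hermite (K : Finset ι) (β γ : ι → ℕ) :
    ∫ u, ∏ j ∈ K, aeval (u j) (hermite (β j)) * aeval (u j) (hermite (γ j))
        ∂(Measure.pi fun _ => gaussianReal 0 1)
      = if ∀ j ∈ K, β j = γ j then ∏ j ∈ K, ((β j)! : ℝ) else 0 := by
  rw [integral_finset_prod_eq_prod K fun j x => aeval x (hermite (β j)) * aeval x (hermite (γ j))]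
  simp_rw [integral_hermite_mul_hermite_gaussianReal]
  exact Finset.prod_ite_zero

theorem sum_filter_coeff_eq_zero_of_sum_prod_hermite_eq_zero (K : Finset ι) (d : κ → ℝ)
    (β : κ → ι → ℕ) (h : ∀ z : ι → ℝ, ∑ i, d i * ∏ j ∈ K, aeval (z j) (hermite (β i j)) = 0)
    (i₀ : κ) : ∑ i with ∀ j ∈ K, β i j = β i₀ j, d i = 0 := by
  have hfactorial : ∏ j ∈ K, ((β i₀ j)! : ℝ) ≠ 0 :=
    Finset.prod_ne_zero_iff.2 fun j _ => Nat.cast_ne_zero.2 (Nat.factorial_ne_zero _)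
  refine (mul_eq_zero.1 ?_).resolve_left hfactorial
  calc (∏ j ∈ K, ((β i₀ j)! : ℝ)) * ∑ i with ∀ j ∈ K, β i j = β i₀ j, d i
      = ∑ i, d i * if ∀ j ∈ K, β i j = β i₀ j then ∏ j ∈ K, ((β i j)! : ℝ) else 0 := by
        rw [Finset.sum_filter, Finset.mul_sum]
        refine Finset.sum_congr rfl fun i _ => ?_
        split_ifs with hi
        · rw [mul_comm]
          congr 1
          exact Finset.prod_congr rfl fun j hj => by rw [hi j hj]
        · simp
    _ = ∫ z, ∑ i, d i * ∏ j ∈ K,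
          aeval (z j) (hermite (β i j)) * aeval (z j) (hermite (β i₀ j))
          ∂(Measure.pi fun _ => gaussianReal 0 1) := by
        rw [integral_finsetSum _ fun i _ => (Integrable.finset_prod K fun j _ =>
          integrable_hermite_mul_hermite_gaussianReal _ _).const_mul (d i)]
        simp_rw [integral_const_mul, integral_pi_prod_hermite_mul_hermite]
    _ = ∫ z, (∑ i, d i * ∏ j ∈ K, aeval (z j) (hermite (β i j)))
          * ∏ j ∈ K, aeval (z j) (hermite (β i₀ j)) ∂(Measure.pi fun _ => gaussianReal 0 1) := by
        simp_rw [Finset.sum_mul, mul_assoc, Finset.prod_mul_distrib]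
    _ = 0 := by simp [h]

lemma prod_aeval_hermite_piecewise [DecidableEq ι] (J : Finset ι) (β : ι → ℕ) (u zbar : ι → ℝ) :
    ∏ j, aeval ((J.piecewise u zbar) j) (hermite (β j))
      = (∏ j ∈ J, aeval (u j) (hermite (β j))) * ∏ j ∈ Jᶜ, aeval (zbar j) (hermite (β j)) := by
  rw [← Finset.prod_mul_prod_compl J]
  congr 1 <;> refine Finset.prod_congr rfl fun j hj => ?_
  · rw [J.piecewise_eq_of_mem _ _ hj]
  · rw [J.piecewise_eq_of_notMem _ _ (Finset.mem_compl.1 hj)]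

theorem integral_sum_prod_hermite_piecewise_mul [DecidableEq ι] (c : κ → ℝ) (α : κ → ι → ℕ)
    (J : Finset ι) (zbar : ι → ℝ) {j₀ : ι} (hj₀ : j₀ ∈ J) :
    ∫ u, (∑ i, c i * ∏ j, aeval ((J.piecewise u zbar) j) (hermite (α i j)))
        * (J.piecewise u zbar) j₀ ∂(Measure.pi fun _ => gaussianReal 0 1)
      = ∑ i, (if ∀ j ∈ J, α i j = (Pi.single j₀ 1 : ι → ℕ) j then c i else 0)
          * ∏ j ∈ Jᶜ, aeval (zbar j) (hermite (α i j)) := by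
  have hpoint (u : ι → ℝ) :
      (∑ i, c i * ∏ j, aeval ((J.piecewise u zbar) j) (hermite (α i j)))
          * (J.piecewise u zbar) j₀
        = ∑ i, (c i * ∏ j ∈ Jᶜ, aeval (zbar j) (hermite (α i j))) * ∏ j ∈ J,
            aeval (u j) (hermite (α i j))
              * aeval (u j) (hermite ((Pi.single j₀ 1 : ι → ℕ) j)) := by
    rw [J.piecewise_eq_of_mem _ _ hj₀, ← prod_aeval_hermite_pi_single hj₀ u, Finset.sum_mul]
    refine Finset.sum_congr rfl fun i _ => ?_
    rw [prod_aeval_hermite_piecewise, Finset.prod_mul_distrib]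
    ring
  simp_rw [hpoint]
  rw [integral_finsetSum _ fun i _ => (Integrable.finset_prod J fun j _ =>
    integrable_hermite_mul_hermite_gaussianReal _ _).const_mul _]
  refine Finset.sum_congr rfl fun i _ => ?_
  rw [integral_const_mul, integral_pi_prod_hermite_mul_hermite]
  split_ifs with hi
  · have hfactorial : ∏ j ∈ J, ((α i j)! : ℝ) = 1 :=
      Finset.prod_eq_one fun j hj => by rw [hi j hj, Pi.single_apply]; split_ifs <;> simp
    rw [hfactorial, mul_one]
  · simp

end HermiteProduct

end ProbabilityTheory

theorem stmt_17_general (p m : ℕ) (c : Fin m → ℝ) (hc : ∀ i, c i ≠ 0)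
    (α : Fin m → Fin p → ℕ) (hα : Function.Injective α)
    (J : Finset (Fin p)) :
    (∀ zbar : Fin p → ℝ, ∀ j0 ∈ J,
        ∫ u : Fin p → ℝ,
          ((∑ i, c i * ∏ j, Polynomial.aeval ((J.piecewise u zbar) j) (Polynomial.hermite (α i j)))
            * (J.piecewise u zbar) j0)
          ∂(Measure.pi fun _ => gaussianReal 0 1) = 0)
      ↔ (∀ i, (∑ j ∈ J, α i j) ≠ 1) := by
  constructor
  · intro h i₁ hi₁
    obtain ⟨j₀, hj₀, hα₁⟩ := (J.sum_eq_one_iff_exists_pi_single (α i₁)).1 hi₁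
    have hcoeff := sum_filter_coeff_eq_zero_of_sum_prod_hermite_eq_zero Jᶜ _ α
      (fun zbar => (integral_sum_prod_hermite_piecewise_mul c α J zbar hj₀).symm.trans
        (h zbar j₀ hj₀)) i₁
    rw [Finset.sum_filter, Finset.sum_eq_single i₁, if_pos fun _ _ => rfl, if_pos hα₁] at hcoeff
    · exact hc i₁ hcoeff
    · intro i _ hne
      split_ifs with hagree hαi
      · refine absurd (hα (funext fun j => ?_)) hne
        by_cases hj : j ∈ J
        · rw [hαi j hj, hα₁ j hj]
        · exact hagree j (Finset.mem_compl.2 hj)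
      all_goals rfl
    · simp
  · intro h zbar j₀ hj₀
    rw [integral_sum_prod_hermite_piecewise_mul c α J zbar hj₀]
    refine Finset.sum_eq_zero fun i _ => ?_
    rw [if_neg fun hαi => h i ((J.sum_eq_one_iff_exists_pi_single (α i)).2 ⟨j₀, hj₀, hαi⟩),
      zero_mul]

/-- **Hermite characterization of the averaged-out directions.**
Let `h(z) = ∑ i, c i ∏ j, He_{α i j}(z j)` be a polynomial on `ℝ^p` in Hermite form, with
nonzero coefficients `c i` and pairwise distinct multi-indices `α i`. Let `J ⊆ {1,…,p}`
be nonempty (determining the coordinate subspace `S = span {e_j : j ∈ J}`). Then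
`E_{z_S ∼ N(0,I_S)}[h(z)·z_S] = 0` for all fixed values of the remaining coordinates
if and only if `∑_{j ∈ J} α i j ≠ 1` for every `i`. -/
theorem stmt_17 (p m : ℕ) (c : Fin m → ℝ) (hc : ∀ i, c i ≠ 0)
    (α : Fin m → Fin p → ℕ) (hα : Function.Injective α)
    (J : Finset (Fin p)) (hJ : J.Nonempty) :
    (∀ zbar : Fin p → ℝ, ∀ j0 ∈ J,
        ∫ u : Fin p → ℝ,
          ((∑ i, c i * ∏ j, Polynomial.aeval ((J.piecewise u zbar) j) (Polynomial.hermite (α i j)))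
            * (J.piecewise u zbar) j0)
          ∂(Measure.pi fun _ => gaussianReal 0 1) = 0)
      ↔ (∀ i, (∑ j ∈ J, α i j) ≠ 1) :=
  stmt_17_general p m c hc α hα J
end

section
/- Fix p ≥ 1 and n ≥ 0 and let M = C(n+p,p) (binomial coefficient). Let p_1, …, p_M be polynomials on ℝ^p of total degree at most n forming an orthonormal basis of the space P_{p,n} of all such polynomials with respect to the inner product ⟨f,g⟩ = E_{z∼N(0,I_p)}[f(z)·g(z)]. For 𝐪 = (𝐪_1, …, 𝐪_M) ∈ (ℝ^p)^M define the M×M matrix X(𝐪) by X_{i_1,i_2}(𝐪) = E_{z∼N(0,I_p)}[p_{i_1}(z)·(1+𝐪_{i_2}ᵀz)^n]. Then det(X(𝐪)) is a polynomial in the entries of 𝐪 (of degree at most n in each block 𝐪_i) that is not identically zero. -/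
open MeasureTheory Real RealInnerProductSpace

noncomputable section

open MeasureTheory Real RealInnerProductSpace

namespace Aux19

open MeasureTheory Real Finset MvPolynomial RealInnerProductSpace Matrix

lemma int_shift (c : ℝ) : Integrable (fun x : ℝ => Real.exp (c * x - x^2/2)) := by
  have h0 : Integrable (fun x : ℝ => Real.exp (-(1/2 : ℝ) * x^2)) :=
    integrable_exp_neg_mul_sq (by norm_num)
  have := (h0.comp_sub_right c).const_mul (Real.exp (c^2/2))
  refine this.congr (Filter.Eventually.of_forall fun x => ?_)
  show Real.exp (c^2/2) * Real.exp (-(1/2) * (x - c)^2) = _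
  rw [← Real.exp_add]; congr 1; ring

lemma int_pow_gauss (k : ℕ) : Integrable (fun x : ℝ => x ^ k * Real.exp (-x^2/2)) := by
  have hg : Integrable (fun x : ℝ =>
      (k.factorial : ℝ) * (Real.exp (1 * x - x^2/2) + Real.exp ((-1) * x - x^2/2))) :=
    (((int_shift 1).add (int_shift (-1))).const_mul _)
  refine hg.mono' ?_ (Filter.Eventually.of_forall fun x => ?_)
  · exact ((continuous_pow k).mul
      ((continuous_id.pow 2).neg.div_const 2).rexp).aestronglyMeasurable
  · rw [norm_mul, norm_pow, norm_of_nonneg (Real.exp_pos _).le]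
    have h1 : |x| ^ k ≤ (k.factorial : ℝ) * Real.exp |x| := by
      have := Real.pow_div_factorial_le_exp (x := |x|) (abs_nonneg x) k
      rw [div_le_iff₀ (by positivity)] at this
      calc |x| ^ k ≤ Real.exp |x| * k.factorial := this
        _ = _ := by ring
    calc ‖x‖ ^ k * Real.exp (-x^2/2) ≤ ((k.factorial : ℝ) * Real.exp |x|) * Real.exp (-x^2/2) :=
          mul_le_mul_of_nonneg_right h1 (Real.exp_pos _).le
      _ ≤ _ := by
          rw [mul_assoc, ← Real.exp_add]
          rcases le_or_gt 0 x with h | h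
          · rw [abs_of_nonneg h]
            refine mul_le_mul_of_nonneg_left ?_ (by positivity)
            calc Real.exp (x + -x^2/2) = Real.exp (1 * x - x^2/2) := by ring_nf
              _ ≤ _ := le_add_of_nonneg_right (Real.exp_pos _).le
          · rw [abs_of_neg h]
            refine mul_le_mul_of_nonneg_left ?_ (by positivity)
            calc Real.exp (-x + -x^2/2) = Real.exp ((-1) * x - x^2/2) := by ring_nf
              _ ≤ _ := le_add_of_nonneg_left (Real.exp_pos _).le

lemma euc_norm_sq {p : ℕ} (z : Eu p) : ‖z‖^2 = ∑ j, (z j)^2 := by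
  rw [EuclideanSpace.norm_eq, Real.sq_sqrt (by positivity)]
  exact Finset.sum_congr rfl fun j _ => by simp [sq_abs]

lemma int_mono_gauss {p : ℕ} (a : Fin p → ℕ) :
    Integrable (fun z : Eu p => (∏ j, z j ^ a j) * Real.exp (-‖z‖^2/2)) := by
  have mp := (EuclideanSpace.volume_preserving_symm_measurableEquiv_toLp (Fin p)).symm
  rw [← mp.integrable_comp_emb (MeasurableEquiv.measurableEmbedding _)]
  have : ((fun z : Eu p => (∏ j, z j ^ a j) * Real.exp (-‖z‖^2/2))
        ∘ (MeasurableEquiv.toLp 2 (Fin p → ℝ)))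
      = fun v : Fin p → ℝ => ∏ j, (v j ^ a j * Real.exp (-(v j)^2/2)) := by
    funext v
    have hz : ∀ j, ((MeasurableEquiv.toLp 2 (Fin p → ℝ)) v) j = v j := fun j => rfl
    show (∏ j, ((MeasurableEquiv.toLp 2 (Fin p → ℝ)) v) j ^ a j)
        * Real.exp (-‖(MeasurableEquiv.toLp 2 (Fin p → ℝ)) v‖^2/2) = _
    rw [Finset.prod_mul_distrib, ← Real.exp_sum, euc_norm_sq]
    simp only [hz]
    congr 1
    rw [← Finset.sum_div, ← Finset.sum_neg_distrib]
  rw [MeasurableEquiv.symm_symm, this]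
  exact Integrable.fintype_prod (fun j => int_pow_gauss (a j))

lemma int_poly_gauss {p : ℕ} (Q : MvPolynomial (Fin p) ℝ) :
    Integrable (fun z : Eu p => eval (fun k => z k) Q) (stdGauss p) := by
  rw [stdGauss, gaussCov]
  have hmeas : Measurable fun x : Eu p =>
      ENNReal.ofReal ((2 * π * 1) ^ (-(p : ℝ) / 2) * Real.exp (-‖x‖ ^ 2 / (2 * 1))) :=
    (Continuous.measurable (by continuity)).ennreal_ofReal
  rw [integrable_withDensity_iff hmeas
    (Filter.Eventually.of_forall fun x => ENNReal.ofReal_lt_top)]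
  have hpos : ∀ x : Eu p,
      (0:ℝ) ≤ (2 * π * 1) ^ (-(p : ℝ) / 2) * Real.exp (-‖x‖ ^ 2 / (2 * 1)) := by
    intro x; positivity
  simp only [ENNReal.toReal_ofReal (hpos _)]
  rw [show (fun x : Eu p => eval (fun k => x k) Q
        * ((2 * π * 1) ^ (-(p : ℝ) / 2) * Real.exp (-‖x‖ ^ 2 / (2 * 1))))
      = fun x : Eu p => ∑ α ∈ Q.support, ((2 * π * 1) ^ (-(p : ℝ) / 2) * coeff α Q)
          * ((∏ j, x j ^ α j) * Real.exp (-‖x‖^2/2)) from ?_]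
  · exact integrable_finset_sum _ fun α _ => (int_mono_gauss _).const_mul _
  · funext x
    conv_lhs => rw [Q.as_sum]
    rw [eval_sum, Finset.sum_mul]
    refine Finset.sum_congr rfl fun α hα => ?_
    rw [eval_monomial, Finsupp.prod_pow]
    ring_nf

lemma int_poly_mono {p : ℕ} (Q : MvPolynomial (Fin p) ℝ) (a : Fin p → ℕ) :
    Integrable (fun z : Eu p => eval (fun k => z k) Q * ∏ j, z j ^ a j) (stdGauss p) := by
  have := int_poly_gauss (Q * ∏ j, (X j : MvPolynomial (Fin p) ℝ) ^ a j)
  refine this.congr (Filter.Eventually.of_forall fun z => ?_)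
  simp [eval_prod]

lemma expand_integral {p : ℕ} (n : ℕ) (Q : MvPolynomial (Fin p) ℝ) (q : Eu p) :
    ∫ z : Eu p, eval (fun k => z k) Q * (1 + ⟪q, z⟫) ^ n ∂stdGauss p
    = ∑ k ∈ range (n+1), ∑ a ∈ piAntidiag univ k,
        ((n.choose k : ℝ) * (Nat.multinomial univ a : ℝ) * ∏ j, q j ^ a j)
          * ∫ z : Eu p, eval (fun k => z k) Q * ∏ j, z j ^ a j ∂stdGauss p := by
  have key : ∀ z : Eu p, eval (fun k => z k) Q * (1 + ⟪q, z⟫) ^ n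
      = ∑ k ∈ range (n+1), ∑ a ∈ piAntidiag univ k,
          ((n.choose k : ℝ) * (Nat.multinomial univ a : ℝ) * ∏ j, q j ^ a j)
            * (eval (fun k => z k) Q * ∏ j, z j ^ a j) := by
    intro z
    have hin : ⟪q, z⟫ = ∑ j, q j * z j := by
      simp [PiLp.inner_apply, RCLike.inner_apply, conj_trivial]
      exact Finset.sum_congr rfl fun _ _ => mul_comm _ _
    rw [hin, add_comm (1:ℝ), add_pow, Finset.mul_sum]
    refine Finset.sum_congr rfl fun k _ => ?_
    rw [Finset.sum_pow_eq_sum_piAntidiag, one_pow, mul_one, Finset.sum_mul, Finset.mul_sum]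
    refine Finset.sum_congr rfl fun a _ => ?_
    simp only [mul_pow, Finset.prod_mul_distrib, one_pow]
    ring
  rw [MeasureTheory.integral_congr_ae (Filter.Eventually.of_forall key)]
  rw [integral_finset_sum _ fun k _ =>
    integrable_finset_sum _ fun a _ => (int_poly_mono Q a).const_mul _]
  refine Finset.sum_congr rfl fun k _ => ?_
  rw [integral_finset_sum _ fun a _ => (int_poly_mono Q a).const_mul _]
  exact Finset.sum_congr rfl fun a _ => by rw [integral_const_mul]

variable {M p : ℕ}

def toExp (i2 : Fin M) (a : Fin p → ℕ) : (Fin M × Fin p) →₀ ℕ :=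
  Finsupp.equivFunOnFinite.symm (fun v => if v.1 = i2 then a v.2 else 0)

lemma toExp_apply (i2 : Fin M) (a : Fin p → ℕ) (v : Fin M × Fin p) :
    toExp i2 a v = if v.1 = i2 then a v.2 else 0 := rfl

lemma eval_monomial_toExp (i2 : Fin M) (a : Fin p → ℕ) (r : ℝ) (q : Fin M → Fin p → ℝ) :
    eval (fun ip : Fin M × Fin p => q ip.1 ip.2) (monomial (toExp i2 a) r)
      = r * ∏ j, q i2 j ^ a j := by
  rw [eval_monomial, Finsupp.prod_pow]
  congr 1
  rw [Fintype.prod_prod_type]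
  rw [Fintype.prod_eq_single i2 (fun i hi => by
    apply Finset.prod_eq_one; intro j _; rw [toExp_apply]; simp [hi])]
  exact Finset.prod_congr rfl fun j _ => by rw [toExp_apply]; simp

def wgt (i : Fin M) (m : (Fin M × Fin p) →₀ ℕ) : ℕ := ∑ j, m (i, j)

lemma wgt_add (i : Fin M) (m1 m2 : (Fin M × Fin p) →₀ ℕ) :
    wgt i (m1 + m2) = wgt i m1 + wgt i m2 := by
  simp [wgt, Finset.sum_add_distrib]

lemma wgt_toExp (i i2 : Fin M) (a : Fin p → ℕ) :
    wgt i (toExp i2 a) = if i = i2 then ∑ j, a j else 0 := by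
  simp only [wgt, toExp_apply]
  by_cases h : i = i2 <;> simp [h]

lemma support_sum_wgt {ι : Type*} (s : Finset ι) (g : ι → MvPolynomial (Fin M × Fin p) ℝ)
    (i : Fin M) (b : ℕ) (h : ∀ t ∈ s, ∀ m ∈ (g t).support, wgt i m ≤ b) :
    ∀ m ∈ (∑ t ∈ s, g t).support, wgt i m ≤ b := by
  intro m hm
  obtain ⟨t, ht, hmt⟩ := Finset.mem_biUnion.1 (MvPolynomial.support_sum hm)
  exact h t ht m hmt

lemma support_prod_wgt {ι : Type*} (s : Finset ι) (g : ι → MvPolynomial (Fin M × Fin p) ℝ)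
    (i : Fin M) (b : ι → ℕ) (h : ∀ t ∈ s, ∀ m ∈ (g t).support, wgt i m ≤ b t) :
    ∀ m ∈ (∏ t ∈ s, g t).support, wgt i m ≤ ∑ t ∈ s, b t := by
  classical
  induction s using Finset.cons_induction with
  | empty =>
      intro m hm
      rw [Finset.prod_empty] at hm
      have : m = 0 := by
        have := MvPolynomial.support_monomial_subset
          (s := (0 : (Fin M × Fin p) →₀ ℕ)) (a := (1:ℝ))
        rw [monomial_zero'] at this
        simpa using Finset.mem_singleton.1 (this (by simpa using hm))
      simp [this, wgt]
  | cons t s hts ih =>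
      intro m hm
      rw [Finset.prod_cons] at hm
      obtain ⟨u, hu, w, hw, huw⟩ := Finset.mem_add.1 (MvPolynomial.support_mul _ _ hm)
      rw [Finset.sum_cons, ← huw, wgt_add]
      exact Nat.add_le_add (h t (Finset.mem_cons_self _ _) u hu)
        (ih (fun t' ht' => h t' (Finset.mem_cons_of_mem ht')) w hw)

lemma coeff_extract {p n : ℕ} (d : (Fin p → ℕ) → ℝ) (κ : ℕ → (Fin p → ℕ) → ℝ)
    (a0 : Fin p → ℕ) (h : ∑ j, a0 j ≤ n) :
    coeff (Finsupp.equivFunOnFinite.symm a0)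
      (∑ k ∈ range (n+1), ∑ a ∈ piAntidiag univ k,
        monomial (Finsupp.equivFunOnFinite.symm a) (κ k a * d a))
      = κ (∑ j, a0 j) a0 * d a0 := by
  rw [MvPolynomial.coeff_sum]
  have step : ∀ k, coeff (Finsupp.equivFunOnFinite.symm a0)
      (∑ a ∈ piAntidiag univ k, monomial (Finsupp.equivFunOnFinite.symm a) (κ k a * d a))
      = if ∑ j, a0 j = k then κ k a0 * d a0 else 0 := by
    intro k
    rw [MvPolynomial.coeff_sum]
    have : ∀ a ∈ piAntidiag univ k,
        coeff (Finsupp.equivFunOnFinite.symm a0)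
          (monomial (Finsupp.equivFunOnFinite.symm a) (κ k a * d a))
        = if a = a0 then κ k a * d a else 0 := by
      intro a _
      rw [MvPolynomial.coeff_monomial]
      congr 1
      simp [Finsupp.equivFunOnFinite.symm.injective.eq_iff]
    rw [Finset.sum_congr rfl this,
      Finset.sum_ite_eq' (piAntidiag univ k) a0 (fun a => κ k a * d a)]
    simp [Finset.mem_piAntidiag]
  rw [Finset.sum_congr rfl (fun k _ => step k), Finset.sum_ite_eq (range (n+1)) (∑ j, a0 j)]
  simp [Nat.lt_succ_iff, h]

lemma exists_det_ne_zero {α : Type*} {M : ℕ} (v : α → EuclideanSpace ℝ (Fin M))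
    (hspan : Submodule.span ℝ (Set.range v) = ⊤) :
    ∃ q : Fin M → α, (Matrix.of fun i1 i2 => v (q i2) i1).det ≠ 0 := by
  obtain ⟨b, hbsub, hbspan, hli⟩ := exists_linearIndependent ℝ (Set.range v)
  rw [hspan] at hbspan
  have hbfin : b.Finite := hli.setFinite
  haveI : Fintype b := hbfin.fintype
  let B : Module.Basis b ℝ (EuclideanSpace ℝ (Fin M)) := Module.Basis.mk hli (by
    rw [Subtype.range_coe, hbspan])
  have hcard : Fintype.card b = M := by
    rw [← Module.finrank_eq_card_basis B, finrank_euclideanSpace_fin]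
  let e : Fin M ≃ b := (Fintype.equivFinOfCardEq hcard).symm
  have hchoice : ∀ i : Fin M, ∃ x : α, v x = (e i : EuclideanSpace ℝ (Fin M)) := by
    intro i; exact hbsub (e i).2
  choose q hq using hchoice
  refine ⟨q, ?_⟩
  set A : Matrix (Fin M) (Fin M) ℝ := Matrix.of fun i1 i2 => v (q i2) i1 with hA
  have li2 : LinearIndependent ℝ (fun i : Fin M => ((e i : b) : EuclideanSpace ℝ (Fin M))) :=
    hli.comp e e.injective
  have li3 : LinearIndependent ℝ (fun i2 : Fin M => Aᵀ i2) := by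
    have heq : (fun i2 : Fin M => Aᵀ i2)
        = fun i : Fin M => WithLp.linearEquiv 2 ℝ (Fin M → ℝ) ((e i : b) : EuclideanSpace ℝ (Fin M)) := by
      funext i2
      rw [← hq i2]; rfl
    rw [heq]
    exact li2.map' _ (LinearEquiv.ker _)
  have hunit : IsUnit Aᵀ := Matrix.linearIndependent_rows_iff_isUnit.1 li3
  have := (Matrix.isUnit_iff_isUnit_det _).1 hunit
  rw [Matrix.det_transpose] at this
  exact this.ne_zero

theorem main (p n M : ℕ)
    (P : Fin M → MvPolynomial (Fin p) ℝ)
    (hdeg : ∀ i, (P i).totalDegree ≤ n)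
    (hON : ∀ i j,
      (∫ z : Eu p, eval (fun k => z k) (P i) * eval (fun k => z k) (P j) ∂stdGauss p)
        = if i = j then 1 else 0) :
    ∃ F : MvPolynomial (Fin M × Fin p) ℝ,
      F ≠ 0 ∧
      (∀ m ∈ F.support, ∀ i, (∑ j : Fin p, m (i, j)) ≤ n) ∧
      ∀ q : Fin M → Eu p,
        Matrix.det (Matrix.of fun i1 i2 =>
          ∫ z : Eu p, eval (fun k => z k) (P i1) * (1 + ⟪q i2, z⟫) ^ n ∂stdGauss p)
        = eval (fun ip => q ip.1 ip.2) F := by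
  classical
  set μ := stdGauss p with hμ
  set cc : Fin M → (Fin p → ℕ) → ℝ := fun i a =>
    ∫ z : Eu p, eval (fun k => z k) (P i) * ∏ j, z j ^ a j ∂μ with hcc
  set κ : ℕ → (Fin p → ℕ) → ℝ := fun k a =>
    (n.choose k : ℝ) * (Nat.multinomial univ a : ℝ) with hκ
  set Ent : Fin M → Fin M → MvPolynomial (Fin M × Fin p) ℝ := fun i1 i2 =>
    ∑ k ∈ range (n+1), ∑ a ∈ piAntidiag univ k, monomial (toExp i2 a) (κ k a * cc i1 a)
    with hEnt
  set F : MvPolynomial (Fin M × Fin p) ℝ := (Matrix.of Ent).det with hF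
  -- evaluation of entries
  have evalEnt : ∀ (q : Fin M → Eu p) i1 i2,
      eval (fun ip : Fin M × Fin p => q ip.1 ip.2) (Ent i1 i2)
      = ∫ z : Eu p, eval (fun k => z k) (P i1) * (1 + ⟪q i2, z⟫) ^ n ∂μ := by
    intro q i1 i2
    rw [hEnt]
    simp only [map_sum]
    rw [expand_integral n (P i1) (q i2)]
    refine Finset.sum_congr rfl fun k hk => Finset.sum_congr rfl fun a ha => ?_
    rw [eval_monomial_toExp i2 a _ (fun i j => q i j)]
    rw [hκ]
    ring
  -- evaluation of the determinant
  have hdet : ∀ q : Fin M → Eu p,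
      Matrix.det (Matrix.of fun i1 i2 =>
        ∫ z : Eu p, eval (fun k => z k) (P i1) * (1 + ⟪q i2, z⟫) ^ n ∂μ)
      = eval (fun ip => q ip.1 ip.2) F := by
    intro q
    rw [hF, RingHom.map_det]
    congr 1
    ext i1 i2
    exact (evalEnt q i1 i2).symm
  refine ⟨F, ?_, ?_, hdet⟩
  · -- F ≠ 0
    set v : Eu p → EuclideanSpace ℝ (Fin M) := fun q =>
      (WithLp.equiv 2 (Fin M → ℝ)).symm
        (fun i => ∫ z : Eu p, eval (fun k => z k) (P i) * (1 + ⟪q, z⟫) ^ n ∂μ) with hv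
    have hsp : Submodule.span ℝ (Set.range v) = ⊤ := by
      by_contra hne
      obtain ⟨c, hcmem, hcne⟩ := Submodule.exists_mem_ne_zero_of_ne_bot
        ((not_iff_not.2 (Submodule.orthogonal_eq_bot_iff)).2 hne)
      have hzero : ∀ qq : Eu p,
          ∑ i, c i * ∫ z : Eu p, eval (fun k => z k) (P i) * (1 + ⟪qq, z⟫) ^ n ∂μ = 0 := by
        intro qq
        have hmem : v qq ∈ Submodule.span ℝ (Set.range v) :=
          Submodule.subset_span (Set.mem_range_self _)
        have := (Submodule.mem_orthogonal _ c).1 hcmem (v qq) hmem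
        rw [show ⟪v qq, c⟫ = ∑ i, (v qq) i * c i by
          simp [PiLp.inner_apply, RCLike.inner_apply, conj_trivial]
          exact Finset.sum_congr rfl fun _ _ => mul_comm _ _] at this
        rw [← this]
        exact Finset.sum_congr rfl fun i _ => by rw [mul_comm]; rfl
      set d : (Fin p → ℕ) → ℝ := fun a => ∑ i, c i * cc i a with hd
      have step1 : ∀ qq : Eu p,
          ∑ k ∈ range (n+1), ∑ a ∈ piAntidiag univ k,
            (κ k a * d a) * ∏ j, qq j ^ a j = 0 := by
        intro qq
        have expand : ∀ i, ∫ z : Eu p, eval (fun k => z k) (P i) * (1 + ⟪qq, z⟫) ^ n ∂μ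
            = ∑ k ∈ range (n+1), ∑ a ∈ piAntidiag univ k,
                (κ k a * ∏ j, qq j ^ a j) * cc i a := by
          intro i
          rw [expand_integral n (P i) qq]
        calc ∑ k ∈ range (n+1), ∑ a ∈ piAntidiag univ k, (κ k a * d a) * ∏ j, qq j ^ a j
            = ∑ k ∈ range (n+1), ∑ a ∈ piAntidiag univ k,
                ∑ i, c i * ((κ k a * ∏ j, qq j ^ a j) * cc i a) := by
              refine Finset.sum_congr rfl fun k _ => Finset.sum_congr rfl fun a _ => ?_
              rw [hd]
              simp only [Finset.mul_sum, Finset.sum_mul]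
              exact Finset.sum_congr rfl fun i _ => by ring
          _ = ∑ i, c i * ∫ z : Eu p, eval (fun k => z k) (P i) * (1 + ⟪qq, z⟫) ^ n ∂μ := by
              have hexp : ∀ i : Fin M, c i * (∫ z : Eu p, eval (fun k => z k) (P i) * (1 + ⟪qq, z⟫) ^ n ∂μ)
                  = ∑ k ∈ range (n+1), ∑ a ∈ piAntidiag univ k,
                      c i * ((κ k a * ∏ j, qq j ^ a j) * cc i a) := by
                intro i
                rw [expand i, Finset.mul_sum]
                exact Finset.sum_congr rfl fun k _ => by rw [Finset.mul_sum]
              rw [Finset.sum_congr rfl fun i (_ : i ∈ (univ : Finset (Fin M))) => hexp i]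
              rw [Finset.sum_congr rfl fun k (_ : k ∈ range (n+1)) =>
                (Finset.sum_comm : ∑ a ∈ piAntidiag univ k, ∑ i : Fin M,
                    c i * ((κ k a * ∏ j, qq j ^ a j) * cc i a)
                  = ∑ i : Fin M, ∑ a ∈ piAntidiag univ k,
                    c i * ((κ k a * ∏ j, qq j ^ a j) * cc i a))]
              rw [Finset.sum_comm]
          _ = 0 := hzero qq
      have hGp : (∑ k ∈ range (n+1), ∑ a ∈ piAntidiag univ k,
          monomial (Finsupp.equivFunOnFinite.symm a) (κ k a * d a)
            : MvPolynomial (Fin p) ℝ) = 0 := by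
        apply MvPolynomial.funext
        intro x
        rw [map_zero]
        simp only [map_sum]
        have : ∀ k (a : Fin p → ℕ),
            eval x (monomial (Finsupp.equivFunOnFinite.symm a) (κ k a * d a))
            = (κ k a * d a) * ∏ j, x j ^ a j := by
          intro k a
          rw [eval_monomial, Finsupp.prod_pow]
          congr 1
        rw [Finset.sum_congr rfl fun k _ => Finset.sum_congr rfl fun a _ => this k a]
        exact step1 ((WithLp.equiv 2 (Fin p → ℝ)).symm x)
      have hdz : ∀ a : Fin p → ℕ, (∑ j, a j) ≤ n → d a = 0 := by
        intro a ha
        have := coeff_extract d κ a ha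
        rw [hGp] at this
        rw [MvPolynomial.coeff_zero] at this
        have hκpos : κ (∑ j, a j) a ≠ 0 := by
          rw [hκ]
          have h1 : 0 < n.choose (∑ j, a j) := Nat.choose_pos ha
          have h2 : 0 < Nat.multinomial univ a := Nat.multinomial_pos _ _
          positivity
        have := this.symm
        rcases mul_eq_zero.1 this with h | h
        · exact absurd h hκpos
        · exact h
      -- now derive c = 0
      have hcj : ∀ j0 : Fin M, c j0 = 0 := by
        intro j0
        have hPj : ∀ i : Fin M,
            (∫ z : Eu p, eval (fun k => z k) (P i) * eval (fun k => z k) (P j0) ∂μ)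
            = ∑ α ∈ (P j0).support, coeff α (P j0) * cc i (fun j => α j) := by
          intro i
          have key : ∀ z : Eu p, eval (fun k => z k) (P i) * eval (fun k => z k) (P j0)
              = ∑ α ∈ (P j0).support, coeff α (P j0)
                  * (eval (fun k => z k) (P i) * ∏ j, z j ^ α j) := by
            intro z
            conv_lhs => rw [(P j0).as_sum]
            rw [eval_sum, Finset.mul_sum]
            refine Finset.sum_congr rfl fun α hα => ?_
            rw [eval_monomial, Finsupp.prod_pow]
            ring
          rw [MeasureTheory.integral_congr_ae (Filter.Eventually.of_forall key)]
          rw [integral_finset_sum _ fun α _ => (int_poly_mono (P i) _).const_mul _]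
          exact Finset.sum_congr rfl fun α _ => by rw [integral_const_mul]
        calc c j0 = ∑ i, c i * (if i = j0 then (1:ℝ) else 0) := by simp
          _ = ∑ i, c i
              * ∫ z : Eu p, eval (fun k => z k) (P i) * eval (fun k => z k) (P j0) ∂μ := by
                refine Finset.sum_congr rfl fun i _ => ?_
                rw [hON i j0]
          _ = ∑ i, ∑ α ∈ (P j0).support, c i * (coeff α (P j0) * cc i (fun j => α j)) := by
                refine Finset.sum_congr rfl fun i _ => ?_
                rw [hPj i, Finset.mul_sum]
          _ = ∑ α ∈ (P j0).support, coeff α (P j0) * d (fun j => α j) := by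
                rw [Finset.sum_comm]
                refine Finset.sum_congr rfl fun α _ => ?_
                rw [hd]
                simp only [Finset.mul_sum]
                exact Finset.sum_congr rfl fun i _ => by ring
          _ = 0 := by
                refine Finset.sum_eq_zero fun α hα => ?_
                have h1 : (∑ j, α j) ≤ n := by
                  have h2 := MvPolynomial.le_totalDegree hα
                  have h3 : α.sum (fun _ e => e) = ∑ j, α j :=
                    Finsupp.sum_fintype _ _ (fun _ => rfl)
                  exact le_trans (le_of_eq h3.symm) (le_trans h2 (hdeg j0))
                rw [hdz (fun j => α j) h1, mul_zero]
      exact hcne (by ext i; exact hcj i)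
    obtain ⟨q, hq⟩ := exists_det_ne_zero v hsp
    intro hF0
    apply hq
    have : (Matrix.of fun i1 i2 => v (q i2) i1)
        = Matrix.of fun i1 i2 =>
            ∫ z : Eu p, eval (fun k => z k) (P i1) * (1 + ⟪q i2, z⟫) ^ n ∂μ := rfl
    rw [this, hdet q, hF0, map_zero]
  · -- support bound
    intro m hm i
    have hwgt : wgt i m ≤ n := by
      rw [hF, Matrix.det_apply] at hm
      have h1 := MvPolynomial.support_sum hm
      obtain ⟨σ, hσ, hmσ⟩ := Finset.mem_biUnion.1 h1
      have h2 : m ∈ (∏ i2, (Matrix.of Ent) (σ i2) i2).support :=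
        MvPolynomial.support_smul hmσ
      have h3 := support_prod_wgt univ (fun i2 => (Matrix.of Ent) (σ i2) i2) i
        (fun i2 => if i = i2 then n else 0) ?_ m h2
      · rwa [Finset.sum_ite_eq univ i (fun _ => n), if_pos (Finset.mem_univ i)] at h3
      · intro i2 _ m' hm'
        have := support_sum_wgt (range (n+1))
          (fun k => ∑ a ∈ piAntidiag univ k, monomial (toExp i2 a) (κ k a * cc (σ i2) a))
          i (if i = i2 then n else 0) ?_ m' hm'
        · exact this
        · intro k hk m'' hm''
          have := support_sum_wgt (piAntidiag univ k)
            (fun a => monomial (toExp i2 a) (κ k a * cc (σ i2) a))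
            i (if i = i2 then n else 0) ?_ m'' hm''
          · exact this
          · intro a ha m3 hm3
            have : m3 = toExp i2 a :=
              Finset.mem_singleton.1 (MvPolynomial.support_monomial_subset hm3)
            rw [this, wgt_toExp]
            have hsum : ∑ j, a j = k := ((Finset.mem_piAntidiag).1 ha).1
            have hkn : k ≤ n := Nat.lt_succ_iff.1 (Finset.mem_range.1 hk)
            by_cases hii : i = i2 <;> simp [hii, hsum, hkn]
    exact hwgt

end Aux19

/-- **Non-degeneracy of the feature matrix (key step of Lemma C.14).**
Fix `p ≥ 1`, `n`, and `M = C(n+p,p)`. Let `P 1, …, P M` be polynomials of total degree at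
most `n` forming an orthonormal basis of the space `P_{p,n}` of all such polynomials with
respect to the Gaussian inner product `⟨f,g⟩ = E_{z∼N(0,I_p)}[f(z)g(z)]`. For
`𝐪 = (𝐪_1,…,𝐪_M) ∈ (ℝ^p)^M` define `X(𝐪)_{i₁,i₂} = E_z[P_{i₁}(z)·(1+𝐪_{i₂}ᵀz)^n]`.
Then `det X(𝐪)` is a polynomial in the entries of `𝐪`, of degree at most `n` in each
block `𝐪_i`, and is not identically zero. -/
theorem stmt_19 (p n : ℕ) (hp : 1 ≤ p)
    (P : Fin (Nat.choose (n + p) p) → MvPolynomial (Fin p) ℝ)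
    (hdeg : ∀ i, P i ∈ MvPolynomial.restrictTotalDegree (Fin p) ℝ n)
    (hON : ∀ i j,
      (∫ z : Eu p, MvPolynomial.eval (fun k => z k) (P i)
          * MvPolynomial.eval (fun k => z k) (P j) ∂stdGauss p)
        = if i = j then 1 else 0)
    (hspan : Submodule.span ℝ (Set.range P)
      = MvPolynomial.restrictTotalDegree (Fin p) ℝ n) :
    ∃ F : MvPolynomial (Fin (Nat.choose (n + p) p) × Fin p) ℝ,
      F ≠ 0 ∧
      (∀ m ∈ F.support, ∀ i, (∑ j : Fin p, m (i, j)) ≤ n) ∧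
      ∀ q : Fin (Nat.choose (n + p) p) → Eu p,
        Matrix.det (Matrix.of fun i1 i2 =>
          ∫ z : Eu p, MvPolynomial.eval (fun k => z k) (P i1)
            * (1 + ⟪q i2, z⟫) ^ n ∂stdGauss p)
        = MvPolynomial.eval (fun ip => q ip.1 ip.2) F := by
  have hdeg' : ∀ i, (P i).totalDegree ≤ n := fun i =>
    ((MvPolynomial.mem_restrictTotalDegree (Fin p) n (P i)).1 (hdeg i))
  exact Aux19.main p n (Nat.choose (n + p) p) P hdeg' hON

end
end
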